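/- Define φ₊(z) = [[√a₀, a₁ + a₂z + a₃z² + a₄z³],[z, −√a₀]] and φ₋(z) = [[−√a₀, a₁ + a₂z + a₃z² + a₄z³],[z, √a₀]] for complex numbers a₀,...,a₄ with a₀ ≠ 0. Then there is no matrix ψ = [[d, e(z)],[0, f]] with d, f ∈ ℂ* and e a polynomial of degree ≤ 1 such that ψφ₊ψ⁻¹ = φ₋ as matrices of polynomials. -/

import Mathlib

open Polynomial Matrix

/-!
Conjugation by `ψ` would give `ψ φ₊ = φ₋ ψ`. Since `ψ` is upper triangular, the `(0, 0)` entries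
of the two sides are `d s + e z` and `-s d`; their constant terms force `2 s d = 0`,
which is impossible for `s ≠ 0 ≠ d`.
-/

lemma Matrix.isUnit_det_fin_two_upperTriangular {R : Type*} [CommRing R] {d f : R}
    (hd : IsUnit d) (hf : IsUnit f) (e : R) : IsUnit (!![d, e; 0, f]).det := by
  simpa [det_fin_two_of] using hd.mul hf

lemma Matrix.mul_eq_mul_of_conj_eq {n R : Type*} [Fintype n] [DecidableEq n] [CommRing R]
    {ψ A B : Matrix n n R} (hψ : IsUnit ψ.det) (h : ψ * A * ψ⁻¹ = B) : ψ * A = B * ψ := by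
  rw [← h, nonsing_inv_mul_cancel_right _ _ hψ]

/-- The entry `e` enters the `(0, 0)` entry of `ψ * A` only through `e * A 1 0`, which has no
constant term. -/
lemma Polynomial.coeff_zero_intertwine_upperTriangular {R : Type*} [CommRing R] (d f : R)
    (e : R[X]) {A B : Matrix (Fin 2) (Fin 2) R[X]} (hA : (A 1 0).coeff 0 = 0)
    (h : !![C d, e; 0, C f] * A = B * !![C d, e; 0, C f]) :
    d * (A 0 0).coeff 0 = (B 0 0).coeff 0 * d := by
  have h00 := congrArg (fun M => (M 0 0).coeff 0) h
  simpa [Matrix.mul_apply, Fin.sum_univ_two, mul_coeff_zero, hA] using h00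

/-- With `s = √a₀` a square root of `a₀ ≠ 0`, let
`φ₊ = [[s, a₁ + a₂z + a₃z² + a₄z³],[z, −s]]` and
`φ₋ = [[−s, a₁ + a₂z + a₃z² + a₄z³],[z, s]]`.
Then there is no matrix `ψ = [[d, e(z)],[0, f]]` with `d, f ∈ ℂ*` and `e` a polynomial
of degree ≤ 1 such that `ψφ₊ψ⁻¹ = φ₋` as matrices of polynomials. -/
theorem stmt_7 (a₀ a₁ a₂ a₃ a₄ s : ℂ) (hs : s ^ 2 = a₀) (h₀ : a₀ ≠ 0) :
    ¬ ∃ (d f : ℂ) (e : Polynomial ℂ), d ≠ 0 ∧ f ≠ 0 ∧ e.degree ≤ 1 ∧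
      (!![C d, e; 0, C f] : Matrix (Fin 2) (Fin 2) (Polynomial ℂ)) *
          !![C s, C a₁ + C a₂ * X + C a₃ * X ^ 2 + C a₄ * X ^ 3; X, -C s] *
          (!![C d, e; 0, C f] : Matrix (Fin 2) (Fin 2) (Polynomial ℂ))⁻¹
        = !![-C s, C a₁ + C a₂ * X + C a₃ * X ^ 2 + C a₄ * X ^ 3; X, C s] := by
  rintro ⟨d, f, e, hd, hf, -, hconj⟩
  have hs₀ : s ≠ 0 := by rintro rfl; exact h₀ (by rw [← hs]; ring)
  have hψ := isUnit_det_fin_two_upperTriangular (isUnit_C.mpr hd.isUnit)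
    (isUnit_C.mpr hf.isUnit) e
  have hcoeff := coeff_zero_intertwine_upperTriangular d f e (by simp)
    (mul_eq_mul_of_conj_eq hψ hconj)
  simp only [of_apply, cons_val', cons_val_zero, empty_val', cons_val_fin_one, coeff_C_zero,
    coeff_neg] at hcoeff
  have hsd : s * d = 0 := by linear_combination hcoeff / 2
  exact mul_ne_zero hs₀ hd hsd
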